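/- The proof system SKHM is strongly complete with respect to the class of all models: every SKHM-consistent set of L_Khm formulas is satisfiable at some state of some model. In particular, every valid L_Khm formula is derivable in SKHM. -/

import Mathlib

/-- Formulas of the language L_Khm over a countable set of proposition
letters (represented by `ℕ`): `φ ::= p | ¬φ | (φ∧φ) | Khm(φ,φ,φ)`. -/
inductive Formula : Type
  | atom : ℕ → Formula
  | neg : Formula → Formula
  | and : Formula → Formula → Formula
  | khm : Formula → Formula → Formula → Formula
deriving DecidableEq

namespace Formula

/-- The falsum `⊥`, as a standard abbreviation. -/
def falsum : Formula := and (atom 0) (neg (atom 0))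

/-- The verum `⊤`. -/
def top : Formula := neg falsum

/-- Material implication, as a standard abbreviation. -/
def imp (φ ψ : Formula) : Formula := neg (and φ (neg ψ))

/-- Biimplication. -/
def biimp (φ ψ : Formula) : Formula := and (imp φ ψ) (imp ψ φ)

/-- The universal modality `Uφ := Khm(¬φ, ⊤, ⊥)`. -/
def U (φ : Formula) : Formula := khm (neg φ) top falsum

/-- Uniform substitution of formulas for proposition letters. -/
def subst (f : ℕ → Formula) : Formula → Formula
  | atom n => f n
  | neg φ => neg (subst f φ)
  | and φ ψ => and (subst f φ) (subst f ψ)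
  | khm φ χ ψ => khm (subst f φ) (subst f χ) (subst f ψ)

end Formula

/-- A model (ability map): a labelled transition system over action symbols `Act`,
with a set of states `S`, transitions `R`, and valuation `V`. -/
structure Model (Act : Type) where
  S : Type
  R : Act → S → S → Prop
  V : S → Set ℕ

namespace Model

variable {Act : Type} (M : Model Act)

/-- `M.bigStep σ s t` : `s →σ t`, i.e. `t` is reachable from `s` by executing the
sequence of actions `σ`. -/
def bigStep : List Act → M.S → M.S → Prop
  | [], s, t => s = t
  | a :: σ, s, t => ∃ u, M.R a s u ∧ bigStep σ u t

/-- `σ = a₁⋯aₙ` is strongly executable at `s` if for each `0 ≤ k < n`,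
`s →σ_k t` implies `t` has at least one `a_{k+1}`-successor. -/
def stronglyExec (σ : List Act) (s : M.S) : Prop :=
  ∀ k (h : k < σ.length) (t : M.S),
    M.bigStep (σ.take k) s t → ∃ u, M.R (σ.get ⟨k, h⟩) t u

/-- Satisfaction. `M.sat (Formula.khm ψ χ φ) s` holds iff there is `σ ∈ Act*`
such that for every `s'` with `M, s' ⊨ ψ`: `σ` is strongly `χ`-executable at `s'`
(strongly executable, and all strictly intermediate states satisfy `χ`) and
`M, t ⊨ φ` for all `t` with `s' →σ t`. -/
def sat : Formula → M.S → Prop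
  | .atom n, s => n ∈ M.V s
  | .neg φ, s => ¬ sat φ s
  | .and φ ψ, s => sat φ s ∧ sat ψ s
  | .khm ψ χ φ, s => ∃ σ : List Act, ∀ s', sat ψ s' →
      (M.stronglyExec σ s' ∧
        ∀ k, 0 < k → k < σ.length → ∀ t, M.bigStep (σ.take k) s' t → sat χ t) ∧
      (∀ t, M.bigStep σ s' t → sat φ t)

end Model

/-- A formula is valid (w.r.t. the class of all models over action symbols `Act`)
if it is satisfied at every state of every model. -/
def Valid (Act : Type) (φ : Formula) : Prop :=
  ∀ M : Model Act, Nonempty M.S → ∀ s : M.S, M.sat φ s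

/-- Boolean evaluation treating proposition letters and `Khm`-formulas as atoms. -/
def evalB (v : Formula → Bool) : Formula → Bool
  | .atom n => v (.atom n)
  | .neg φ => ! evalB v φ
  | .and φ ψ => evalB v φ && evalB v ψ
  | .khm ψ χ φ => v (.khm ψ χ φ)

/-- Propositional tautologies. -/
def Tautology (φ : Formula) : Prop := ∀ v, evalB v φ = true

open Formula in
/-- Derivability in the proof system SKHM. -/
inductive Deriv : Formula → Prop
  | taut {φ} : Tautology φ → Deriv φ
  | distU (p q) : Deriv (((U p).and (U (p.imp q))).imp (U q))
  | tU (p) : Deriv ((U p).imp p)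
  | fourKhmU (p o q) : Deriv ((khm p o q).imp (U (khm p o q)))
  | fiveKhmU (p o q) : Deriv ((neg (khm p o q)).imp (U (neg (khm p o q))))
  | empKhm (p q) : Deriv ((U (p.imp q)).imp (khm p falsum q))
  | compKhm (p o r q) :
      Deriv ((((khm p o r).and (khm r o q)).and (U (r.imp o))).imp (khm p o q))
  | oneKhm (p o q) :
      Deriv (((khm p o q).and (neg (khm p falsum q))).imp (khm p falsum o))
  | uKhm (p' p o o' q q') :
      Deriv (((((U (p'.imp p)).and (U (o.imp o'))).and (U (q.imp q'))).and
        (khm p o q)).imp (khm p' o' q'))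
  | mp {φ ψ} : Deriv (φ.imp ψ) → Deriv φ → Deriv ψ
  | necU {φ} : Deriv φ → Deriv (U φ)
  | sub {φ} (f : ℕ → Formula) : Deriv φ → Deriv (φ.subst f)

/-- Conjunction of a finite list of formulas. -/
def conjList : List Formula → Formula
  | [] => Formula.top
  | φ :: L => φ.and (conjList L)

/-- A set of formulas is SKHM-consistent if no finite conjunction of its
members has its negation derivable in SKHM. -/
def ConsistentSet (Γ : Set Formula) : Prop :=
  ∀ L : List Formula, (∀ φ ∈ L, φ ∈ Γ) → ¬ Deriv (Formula.neg (conjList L))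

/-- Maximal SKHM-consistent set. -/
def MCS (Γ : Set Formula) : Prop :=
  ConsistentSet Γ ∧ ∀ Δ, ConsistentSet Δ → Γ ⊆ Δ → Δ = Γ

/-- `Δ|Khm`: the positive `Khm`-formulas of `Δ`. -/
def khmPart (Δ : Set Formula) : Set Formula :=
  {θ ∈ Δ | ∃ ψ χ φ, θ = Formula.khm ψ χ φ}

/-- `Φ_Γ`: the set of all MCSs `Δ` with `Δ|Khm = Γ|Khm`. -/
def PhiGamma (Γ : Set Formula) : Set (Set Formula) :=
  {Δ | MCS Δ ∧ khmPart Δ = khmPart Γ}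

/-- Canonical action symbols: `⟨ψ,⊥,φ⟩` (`one ψ φ`) and `⟨χ^ψ,φ⟩` (`two χ ψ φ`). -/
inductive CanAct : Type
  | one : Formula → Formula → CanAct
  | two : Formula → Formula → Formula → CanAct
deriving DecidableEq

/-- The formula in the last component of a canonical action. -/
def CanAct.post : CanAct → Formula
  | .one _ φ => φ
  | .two _ _ φ => φ

/-- The canonical action set
`Σ_Γ = {⟨ψ,⊥,φ⟩ : Khm(ψ,⊥,φ) ∈ Γ} ∪ {⟨χ^ψ,φ⟩ : Khm(ψ,χ,φ) ∈ Γ, ¬Khm(ψ,⊥,φ) ∈ Γ}`. -/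
def SigmaGamma (Γ : Set Formula) : Set CanAct :=
  {a | (∃ ψ φ, a = CanAct.one ψ φ ∧ Formula.khm ψ Formula.falsum φ ∈ Γ) ∨
       (∃ χ ψ φ, a = CanAct.two χ ψ φ ∧ Formula.khm ψ χ φ ∈ Γ ∧
          Formula.neg (Formula.khm ψ Formula.falsum φ) ∈ Γ)}

/-- Canonical states: pairs `(Δ, χ^ψ)` (the marker `χ^ψ` is the pair `(χ, ψ)`)
with `χ ∈ Δ ∈ Φ_Γ`, and either `⟨χ^ψ,φ⟩ ∈ Σ_Γ` for some `φ`, or `⟨ψ,⊥,χ⟩ ∈ Σ_Γ`. -/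
def CanStates (Γ : Set Formula) : Set (Set Formula × Formula × Formula) :=
  {w | w.1 ∈ PhiGamma Γ ∧ w.2.1 ∈ w.1 ∧
       ((∃ φ, CanAct.two w.2.1 w.2.2 φ ∈ SigmaGamma Γ) ∨
        CanAct.one w.2.2 w.2.1 ∈ SigmaGamma Γ)}

/-- The canonical model `M^c_Γ` over the action set `Σ_Γ`. For a canonical state
`w`, `L(w) = w.1.1` and `R(w) = w.1.2`. -/
def canonicalModel (Γ : Set Formula) : Model {a : CanAct // a ∈ SigmaGamma Γ} where
  S := {w : Set Formula × Formula × Formula // w ∈ CanStates Γ}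
  R a w w' :=
    match a.1 with
    | CanAct.one ψ φ => ψ ∈ w.1.1 ∧ w'.1.2 = (φ, ψ)
    | CanAct.two χ ψ φ => w.1.2 = (χ, ψ) ∧ φ ∈ w'.1.1
  V w := {n | Formula.atom n ∈ w.1.1}


/-! Canonical model: a consistent set extends to a maximal one `Γ`, and the truth lemma holds in
`canonicalModel Γ`. Since `Khm`-literals are universal (`4KhmU`, `5KhmU`), `U φ ∈ Γ` iff `φ` lies
in every member of `Φ_Γ`. A formula `Khm(ψ,χ,φ) ∈ Γ` is witnessed by the plan `⟨ψ,⊥,φ⟩` or, if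
`Khm(ψ,⊥,φ) ∉ Γ`, by `⟨ψ,⊥,χ⟩⟨χ^ψ,φ⟩` (`ONEKhm`). Conversely, a plan that works from all
`ψ`-states splits into blocks `⟨ψ',⊥,g'⟩` and `⟨ψ',⊥,g'⟩⟨g'^ψ',g''⟩`, each yielding a
`Khm`-formula of `Γ`; the blocks are glued by `COMPKhm`, and `UKhm` adjusts pre- and
postconditions. -/

open Formula

@[simp] lemma evalB_imp (v : Formula → Bool) (φ ψ : Formula) :
    evalB v (φ.imp ψ) = (!(evalB v φ && !evalB v ψ)) := rfl

@[simp] lemma evalB_falsum (v : Formula → Bool) : evalB v falsum = false := by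
  simp [falsum, evalB]

@[simp] lemma evalB_top (v : Formula → Bool) : evalB v top = true := by
  simp [top, evalB]

@[simp] lemma evalB_conjList (v : Formula → Bool) (L : List Formula) :
    evalB v (conjList L) = L.all (evalB v) := by
  induction L with
  | nil => simp [conjList]
  | cons φ L ih => simp [conjList, evalB, ih]

def TautEntails (L : List Formula) (φ : Formula) : Prop :=
  ∀ v, (∀ ψ ∈ L, evalB v ψ = true) → evalB v φ = true

namespace Deriv

lemma of_tautEntails {L : List Formula} {φ : Formula} (hL : ∀ ψ ∈ L, Deriv ψ)
    (h : TautEntails L φ) : Deriv φ := by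
  induction L generalizing φ with
  | nil => exact taut fun v => h v (by simp)
  | cons ψ L ih =>
    refine mp (ih (fun χ hχ => hL χ (by simp [hχ])) fun v hv => ?_) (hL ψ (by simp))
    cases hψ : evalB v ψ <;> simp_all [TautEntails]

lemma imp_of_tautEntails {L : List Formula} {φ : Formula} (h : TautEntails L φ) :
    Deriv ((conjList L).imp φ) :=
  taut fun v => by simpa [or_iff_not_imp_left] using h v

end Deriv

lemma exists_deriv_imp_neg_of_not_consistent_insert {Γ : Set Formula} {φ : Formula}
    (h : ¬ ConsistentSet (insert φ Γ)) :
    ∃ L : List Formula, (∀ ψ ∈ L, ψ ∈ Γ) ∧ Deriv ((conjList L).imp (neg φ)) := by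
  simp only [ConsistentSet, not_forall, not_not] at h
  obtain ⟨L, hL, hd⟩ := h
  refine ⟨L.filter (· ≠ φ), fun ψ hψ => ?_, Deriv.of_tautEntails (L := [_]) (by simpa) ?_⟩
  · simp only [List.mem_filter, decide_eq_true_eq] at hψ
    exact (hL ψ hψ.1).resolve_left hψ.2
  · intro v hv
    simp only [List.forall_mem_cons, evalB, evalB_imp, evalB_conjList] at hv ⊢
    grind [List.all_eq_true]

lemma isOfFiniteCharacter_consistentSet :
    Order.IsOfFiniteCharacter {Γ : Set Formula | ConsistentSet Γ} := by
  refine fun Γ => ⟨fun hΓ Δ hΔ _ L hL => hΓ L fun ψ hψ => hΔ (hL ψ hψ), fun h L hL => ?_⟩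
  exact h {ψ | ψ ∈ L} (fun ψ hψ => hL ψ hψ) L.finite_toSet L fun _ => id

lemma ConsistentSet.exists_mcs_superset {Γ : Set Formula} (h : ConsistentSet Γ) :
    ∃ Δ, Γ ⊆ Δ ∧ MCS Δ := by
  obtain ⟨Δ, hΓΔ, hΔ, hmax⟩ := isOfFiniteCharacter_consistentSet.exists_maximal h
  exact ⟨Δ, hΓΔ, hΔ, fun Θ hΘ hΔΘ => (hmax hΘ hΔΘ).antisymm hΔΘ⟩

namespace MCS

variable {Γ : Set Formula}

lemma mem_of_deriv_conjList_imp (h : MCS Γ) {L : List Formula} {φ : Formula}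
    (hL : ∀ ψ ∈ L, ψ ∈ Γ) (hd : Deriv ((conjList L).imp φ)) : φ ∈ Γ := by
  by_contra hφ
  have hins : ¬ ConsistentSet (insert φ Γ) := fun hcon =>
    hφ (h.2 _ hcon (Set.subset_insert _ _) ▸ Set.mem_insert _ _)
  obtain ⟨M, hM, hd'⟩ := exists_deriv_imp_neg_of_not_consistent_insert hins
  refine h.1 (L ++ M) (by simpa [or_imp, forall_and] using ⟨hL, hM⟩)
    (Deriv.of_tautEntails (L := [(conjList L).imp φ, (conjList M).imp (neg φ)])
      (by simp [hd, hd']) fun v hv => ?_)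
  simp only [List.forall_mem_cons, evalB, evalB_imp, evalB_conjList,
    List.all_append] at hv ⊢
  grind

lemma mem_of_tautEntails (h : MCS Γ) {L : List Formula} {φ : Formula}
    (hL : ∀ ψ ∈ L, ψ ∈ Γ) (hφ : TautEntails L φ) : φ ∈ Γ :=
  h.mem_of_deriv_conjList_imp hL (Deriv.imp_of_tautEntails hφ)

lemma mem_of_deriv (h : MCS Γ) {φ : Formula} (hφ : Deriv φ) : φ ∈ Γ :=
  h.mem_of_deriv_conjList_imp (L := []) (by simp)
    (Deriv.of_tautEntails (L := [φ]) (by simpa) fun v hv => by simp_all)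

lemma neg_mem_iff (h : MCS Γ) {φ : Formula} : neg φ ∈ Γ ↔ φ ∉ Γ := by
  refine ⟨fun hn hφ => h.1 [φ, neg φ] (by simp [hφ, hn]) (Deriv.taut fun v => ?_),
    fun hφ => ?_⟩
  · simp [conjList, evalB]
  · have hins : ¬ ConsistentSet (insert φ Γ) := fun hcon =>
      hφ (h.2 _ hcon (Set.subset_insert _ _) ▸ Set.mem_insert _ _)
    obtain ⟨L, hL, hd⟩ := exists_deriv_imp_neg_of_not_consistent_insert hins
    exact h.mem_of_deriv_conjList_imp hL hd

lemma and_mem_iff (h : MCS Γ) {φ ψ : Formula} : φ.and ψ ∈ Γ ↔ φ ∈ Γ ∧ ψ ∈ Γ := by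
  refine ⟨fun hφψ => ⟨?_, ?_⟩, fun ⟨hφ, hψ⟩ => ?_⟩
  · exact h.mem_of_tautEntails (L := [_]) (by simpa) fun v => by simp_all [evalB]
  · exact h.mem_of_tautEntails (L := [_]) (by simpa) fun v => by simp_all [evalB]
  · exact h.mem_of_tautEntails (L := [φ, ψ]) (by simp [hφ, hψ]) fun v => by simp_all [evalB]

lemma mem_of_imp_mem (h : MCS Γ) {φ ψ : Formula} (hφψ : φ.imp ψ ∈ Γ) (hφ : φ ∈ Γ) :
    ψ ∈ Γ :=
  h.mem_of_tautEntails (L := [φ.imp ψ, φ]) (by simp [hφψ, hφ]) fun v hv => by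
    simp only [List.forall_mem_cons, evalB_imp] at hv
    grind

lemma imp_mem_of_imp (h : MCS Γ) {φ ψ : Formula} (hφψ : φ ∈ Γ → ψ ∈ Γ) : φ.imp ψ ∈ Γ := by
  by_cases hφ : φ ∈ Γ
  · exact h.mem_of_tautEntails (L := [_]) (by simpa using hφψ hφ) fun v => by simp_all
  · exact h.mem_of_tautEntails (L := [_]) (by simpa using h.neg_mem_iff.2 hφ)
      fun v => by simp_all [evalB]

lemma U_mem_of_deriv (h : MCS Γ) {φ : Formula} (hφ : Deriv φ) : U φ ∈ Γ :=
  h.mem_of_deriv hφ.necU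

lemma U_imp_self_mem (h : MCS Γ) (φ : Formula) : U (φ.imp φ) ∈ Γ :=
  h.U_mem_of_deriv (Deriv.taut fun v => by simp)

lemma khm_mono (h : MCS Γ) {p p' o o' q q' : Formula} (hkhm : khm p o q ∈ Γ)
    (hp : U (p'.imp p) ∈ Γ) (ho : U (o.imp o') ∈ Γ) (hq : U (q.imp q') ∈ Γ) :
    khm p' o' q' ∈ Γ :=
  h.mem_of_imp_mem (h.mem_of_deriv (Deriv.uKhm p' p o o' q q'))
    (h.and_mem_iff.2 ⟨h.and_mem_iff.2 ⟨h.and_mem_iff.2 ⟨hp, ho⟩, hq⟩, hkhm⟩)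

lemma khm_comp (h : MCS Γ) {p o r q : Formula} (hpr : khm p o r ∈ Γ)
    (hrq : khm r o q ∈ Γ) (hro : U (r.imp o) ∈ Γ) : khm p o q ∈ Γ :=
  h.mem_of_imp_mem (h.mem_of_deriv (Deriv.compKhm p o r q))
    (h.and_mem_iff.2 ⟨h.and_mem_iff.2 ⟨hpr, hrq⟩, hro⟩)

lemma khm_falsum_mid_mono (h : MCS Γ) {p q : Formula} (o : Formula)
    (hpq : khm p falsum q ∈ Γ) : khm p o q ∈ Γ :=
  h.khm_mono hpq (h.U_imp_self_mem p) (h.U_mem_of_deriv (Deriv.taut fun v => by simp))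
    (h.U_imp_self_mem q)

lemma khm_of_U_imp (h : MCS Γ) {p q : Formula} (o : Formula) (hpq : U (p.imp q) ∈ Γ) :
    khm p o q ∈ Γ :=
  h.khm_falsum_mid_mono o (h.mem_of_imp_mem (h.mem_of_deriv (Deriv.empKhm p q)) hpq)

lemma khm_falsum_falsum (h : MCS Γ) (q : Formula) : khm falsum falsum q ∈ Γ :=
  h.khm_of_U_imp falsum (h.U_mem_of_deriv (Deriv.taut fun v => by simp))

end MCS

def khmLiterals (Γ : Set Formula) : Set Formula :=
  {θ ∈ Γ | ∃ p o q, θ = khm p o q ∨ θ = neg (khm p o q)}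

lemma U_mem_of_deriv_conjList_khmLiterals {Γ : Set Formula} (hΓ : MCS Γ) {K : List Formula}
    (hK : ∀ κ ∈ K, κ ∈ khmLiterals Γ) {φ : Formula} (hφ : Deriv ((conjList K).imp φ)) :
    U φ ∈ Γ := by
  induction K generalizing φ with
  | nil => exact hΓ.U_mem_of_deriv (hφ.mp (Deriv.taut fun v => by simp [conjList]))
  | cons κ K ih =>
    obtain ⟨hκΓ, p, o, q, hκ⟩ := hK κ (by simp)
    have hUκ : U κ ∈ Γ := hΓ.mem_of_imp_mem (hΓ.mem_of_deriv (by
      rcases hκ with rfl | rfl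
      exacts [.fourKhmU p o q, .fiveKhmU p o q])) hκΓ
    refine hΓ.mem_of_imp_mem (hΓ.mem_of_deriv (Deriv.distU κ φ))
      (hΓ.and_mem_iff.2 ⟨hUκ, ih (fun κ' hκ' => hK κ' (by simp [hκ'])) ?_⟩)
    refine Deriv.of_tautEntails (L := [_]) (by simpa) fun v hv => ?_
    simp only [List.forall_mem_cons, conjList, evalB, evalB_imp] at hv ⊢
    grind

lemma khmPart_eq_of_khmLiterals_subset {Γ Δ : Set Formula} (hΓ : MCS Γ) (hΔ : MCS Δ)
    (hΓΔ : khmLiterals Γ ⊆ Δ) : khmPart Δ = khmPart Γ := by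
  ext θ
  refine ⟨fun ⟨hθΔ, p, o, q, hθ⟩ => ⟨?_, p, o, q, hθ⟩, fun ⟨hθΓ, p, o, q, hθ⟩ =>
    ⟨hΓΔ ⟨hθΓ, p, o, q, .inl hθ⟩, p, o, q, hθ⟩⟩
  by_contra hθΓ
  subst hθ
  exact hΔ.neg_mem_iff.1 (hΓΔ ⟨hΓ.neg_mem_iff.2 hθΓ, p, o, q, .inr rfl⟩) hθΔ

lemma mem_PhiGamma_self {Γ : Set Formula} (hΓ : MCS Γ) : Γ ∈ PhiGamma Γ := ⟨hΓ, rfl⟩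

lemma khm_mem_iff_of_mem_PhiGamma {Γ Δ : Set Formula} (hΔ : Δ ∈ PhiGamma Γ)
    {p o q : Formula} : khm p o q ∈ Δ ↔ khm p o q ∈ Γ := by
  have := congrArg (khm p o q ∈ ·) hΔ.2
  simpa [khmPart] using this

lemma U_mem_iff_forall_PhiGamma {Γ : Set Formula} (hΓ : MCS Γ) {φ : Formula} :
    U φ ∈ Γ ↔ ∀ Δ ∈ PhiGamma Γ, φ ∈ Δ := by
  refine ⟨fun hU Δ hΔ => hΔ.1.mem_of_imp_mem (hΔ.1.mem_of_deriv (Deriv.tU φ))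
    ((khm_mem_iff_of_mem_PhiGamma hΔ).2 hU), fun h => ?_⟩
  by_contra hU
  have hcons : ConsistentSet (insert (neg φ) (khmLiterals Γ)) := by
    by_contra hcon
    obtain ⟨K, hK, hd⟩ := exists_deriv_imp_neg_of_not_consistent_insert hcon
    exact hU (U_mem_of_deriv_conjList_khmLiterals hΓ hK
      (Deriv.of_tautEntails (L := [_]) (by simpa) fun v => by simp [evalB]))
  obtain ⟨Δ, hsub, hΔ⟩ := hcons.exists_mcs_superset
  have hΔΦ : Δ ∈ PhiGamma Γ :=
    ⟨hΔ, khmPart_eq_of_khmLiterals_subset hΓ hΔ fun θ hθ => hsub (Set.mem_insert_of_mem _ hθ)⟩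
  exact hΔ.neg_mem_iff.1 (hsub (Set.mem_insert _ _)) (h Δ hΔΦ)

lemma exists_mem_PhiGamma_of_khm_mem {Γ : Set Formula} (hΓ : MCS Γ) {p o q : Formula}
    (hkhm : khm p o q ∈ Γ) (hp : ∃ Δ ∈ PhiGamma Γ, p ∈ Δ) : ∃ Δ ∈ PhiGamma Γ, q ∈ Δ := by
  by_contra! hq
  obtain ⟨Δ, hΔ, hpΔ⟩ := hp
  have hUq : U (q.imp falsum) ∈ Γ := (U_mem_iff_forall_PhiGamma hΓ).2 fun Δ hΔ =>
    hΔ.1.imp_mem_of_imp fun hqΔ => absurd hqΔ (hq Δ hΔ)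
  have hUp : U (neg p) ∈ Γ := hΓ.khm_mono hkhm
    (hΓ.U_mem_of_deriv (Deriv.taut fun v => by simp [evalB]))
    (hΓ.U_mem_of_deriv (Deriv.taut fun v => by simp [top, evalB])) hUq
  exact hΔ.1.neg_mem_iff.1 ((U_mem_iff_forall_PhiGamma hΓ).1 hUp Δ hΔ) hpΔ

namespace Model

variable {Act : Type} (M : Model Act)

/-- `σ` is strongly `P`-executable at `s` and every run of it from `s` ends in `Q`. -/
def Achieves (σ : List Act) (P Q : M.S → Prop) (s : M.S) : Prop :=
  (M.stronglyExec σ s ∧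
    ∀ k, 0 < k → k < σ.length → ∀ t, M.bigStep (σ.take k) s t → P t) ∧
  ∀ t, M.bigStep σ s t → Q t

variable {M}

lemma sat_khm_iff {ψ χ φ : Formula} {s : M.S} :
    M.sat (khm ψ χ φ) s ↔ ∃ σ, ∀ s', M.sat ψ s' → M.Achieves σ (M.sat χ) (M.sat φ) s' :=
  Iff.rfl

lemma stronglyExec_cons {a : Act} {σ : List Act} {s : M.S} :
    M.stronglyExec (a :: σ) s ↔ (∃ u, M.R a s u) ∧ ∀ u, M.R a s u → M.stronglyExec σ u := by
  refine ⟨fun h => ⟨h 0 (by simp) s rfl, fun u hu k hk t ht =>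
    h (k + 1) (by simpa using hk) t ⟨u, hu, ht⟩⟩, fun ⟨hex, h⟩ k hk t ht => ?_⟩
  cases k with
  | zero => exact (show s = t from ht) ▸ hex
  | succ k =>
    obtain ⟨u, hu, ht⟩ := ht
    exact h u hu k (by simpa using hk) t ht

@[simp] lemma achieves_nil {P Q : M.S → Prop} {s : M.S} : M.Achieves [] P Q s ↔ Q s := by
  refine ⟨fun h => h.2 s rfl, fun hs => ⟨⟨fun k hk => ?_, fun k _ hk => ?_⟩, fun t ht => ?_⟩⟩
  · simp at hk
  · simp at hk
  · exact (show s = t from ht) ▸ hs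

lemma achieves_cons {a : Act} {σ : List Act} {P Q : M.S → Prop} {s : M.S} :
    M.Achieves (a :: σ) P Q s ↔
      (∃ u, M.R a s u) ∧ ∀ u, M.R a s u → (σ ≠ [] → P u) ∧ M.Achieves σ P Q u := by
  simp only [Achieves, stronglyExec_cons]
  constructor
  · rintro ⟨⟨⟨hex, hexec⟩, hmid⟩, hend⟩
    refine ⟨hex, fun u hu => ⟨fun hσ => hmid 1 one_pos ?_ u ⟨u, hu, rfl⟩,
      ⟨hexec u hu, fun k hk hkσ t ht => hmid (k + 1) k.succ_pos (by simpa using hkσ) t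
        ⟨u, hu, ht⟩⟩, fun t ht => hend t ⟨u, hu, ht⟩⟩⟩
    simpa [List.length_pos_iff] using hσ
  · rintro ⟨hex, h⟩
    refine ⟨⟨⟨hex, fun u hu => (h u hu).2.1.1⟩, fun k hk hkσ t ht => ?_⟩,
      fun t ⟨u, hu, ht⟩ => (h u hu).2.2 t ht⟩
    rcases k with _ | _ | k
    · exact absurd hk (lt_irrefl 0)
    · obtain ⟨u, hu, rfl⟩ := ht
      exact (h u hu).1 (by rintro rfl; simp at hkσ)
    · obtain ⟨u, hu, ht⟩ := ht
      exact (h u hu).2.1.2 (k + 1) k.succ_pos (by simpa using hkσ) t ht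

lemma achieves_cons_congr {a : Act} {σ : List Act} {P Q : M.S → Prop} {s s' : M.S}
    (hR : ∀ u, M.R a s u ↔ M.R a s' u) :
    M.Achieves (a :: σ) P Q s ↔ M.Achieves (a :: σ) P Q s' := by
  simp only [achieves_cons, hR]

end Model

def Formula.encode : Formula → ℕ
  | atom n => Nat.pair 0 n
  | neg φ => Nat.pair 1 φ.encode
  | and φ ψ => Nat.pair 2 (Nat.pair φ.encode ψ.encode)
  | khm ψ χ φ => Nat.pair 3 (Nat.pair ψ.encode (Nat.pair χ.encode φ.encode))

lemma Formula.encode_injective : Function.Injective Formula.encode := by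
  intro φ ψ h
  induction φ generalizing ψ <;> cases ψ <;> simp only [encode, Nat.pair_eq_pair] at h <;>
    grind

instance : Countable Formula := Formula.encode_injective.countable

instance : Countable CanAct := by
  refine (Function.Injective.countable (f := fun a : CanAct => match a with
    | .one ψ φ => (Sum.inl (ψ, φ) : Formula × Formula ⊕ Formula × Formula × Formula)
    | .two χ ψ φ => Sum.inr (χ, ψ, φ)) ?_)
  rintro (_ | _) (_ | _) h <;> simp_all

section Canonical

variable {Γ : Set Formula}

lemma one_mem_SigmaGamma {ψ φ : Formula} (h : khm ψ falsum φ ∈ Γ) :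
    CanAct.one ψ φ ∈ SigmaGamma Γ :=
  .inl ⟨ψ, φ, rfl, h⟩

lemma two_mem_SigmaGamma {χ ψ φ : Formula} (h : khm ψ χ φ ∈ Γ)
    (hbot : neg (khm ψ falsum φ) ∈ Γ) : CanAct.two χ ψ φ ∈ SigmaGamma Γ :=
  .inr ⟨χ, ψ, φ, rfl, h, hbot⟩

lemma khm_mem_of_one_mem_SigmaGamma {ψ φ : Formula} (h : CanAct.one ψ φ ∈ SigmaGamma Γ) :
    khm ψ falsum φ ∈ Γ := by
  obtain ⟨_, _, ⟨⟩, h⟩ | ⟨_, _, _, ⟨⟩, _⟩ := h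
  exact h

lemma khm_mem_of_two_mem_SigmaGamma {χ ψ φ : Formula} (h : CanAct.two χ ψ φ ∈ SigmaGamma Γ) :
    khm ψ χ φ ∈ Γ ∧ neg (khm ψ falsum φ) ∈ Γ := by
  obtain ⟨_, _, ⟨⟩, _⟩ | ⟨_, _, _, ⟨⟩, h⟩ := h
  exact h

lemma nonempty_SigmaGamma (hΓ : MCS Γ) : Nonempty (SigmaGamma Γ) :=
  ⟨⟨_, one_mem_SigmaGamma (hΓ.khm_falsum_falsum top)⟩⟩

namespace canonicalModel

lemma mem_PhiGamma (w : (canonicalModel Γ).S) : w.1.1 ∈ PhiGamma Γ := w.2.1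

lemma mcs (w : (canonicalModel Γ).S) : MCS w.1.1 := w.2.1.1

lemma mem_of_marker_eq {w : (canonicalModel Γ).S} {φ ψ : Formula} (h : w.1.2 = (φ, ψ)) :
    φ ∈ w.1.1 := by
  simpa [h] using w.2.2.1

lemma R_one {ψ φ : Formula} {h : CanAct.one ψ φ ∈ SigmaGamma Γ} {w u : (canonicalModel Γ).S} :
    (canonicalModel Γ).R ⟨.one ψ φ, h⟩ w u ↔ ψ ∈ w.1.1 ∧ u.1.2 = (φ, ψ) :=
  Iff.rfl

lemma R_two {χ ψ φ : Formula} {h : CanAct.two χ ψ φ ∈ SigmaGamma Γ}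
    {w u : (canonicalModel Γ).S} :
    (canonicalModel Γ).R ⟨.two χ ψ φ, h⟩ w u ↔ w.1.2 = (χ, ψ) ∧ φ ∈ u.1.1 :=
  Iff.rfl

lemma exists_state {Δ : Set Formula} (hΔ : Δ ∈ PhiGamma Γ) {ψ φ : Formula} (hφ : φ ∈ Δ)
    (h : CanAct.one ψ φ ∈ SigmaGamma Γ) :
    ∃ w : (canonicalModel Γ).S, w.1.1 = Δ ∧ w.1.2 = (φ, ψ) :=
  ⟨⟨(Δ, φ, ψ), hΔ, hφ, .inr h⟩, rfl, rfl⟩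

lemma exists_state_marker_top (hΓ : MCS Γ) {Δ : Set Formula} (hΔ : Δ ∈ PhiGamma Γ) :
    ∃ w : (canonicalModel Γ).S, w.1.1 = Δ ∧ w.1.2 = (top, falsum) :=
  exists_state hΔ (hΔ.1.mem_of_deriv (Deriv.taut fun v => by simp))
    (one_mem_SigmaGamma (hΓ.khm_falsum_falsum top))

lemma not_R_two_of_marker_top (hΓ : MCS Γ) {χ ψ φ : Formula}
    {h : CanAct.two χ ψ φ ∈ SigmaGamma Γ} {w u : (canonicalModel Γ).S}
    (hw : w.1.2 = (top, falsum)) : ¬ (canonicalModel Γ).R ⟨.two χ ψ φ, h⟩ w u := by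
  rintro ⟨hwχψ, -⟩
  obtain ⟨-, rfl⟩ := Prod.ext_iff.1 (hw.symm.trans hwχψ)
  exact (hΓ.neg_mem_iff.1 (khm_mem_of_two_mem_SigmaGamma h).2) (hΓ.khm_falsum_falsum φ)

lemma U_imp_mem_of_forall (hΓ : MCS Γ) {φ ψ : Formula}
    (h : ∀ w : (canonicalModel Γ).S, φ ∈ w.1.1 → ψ ∈ w.1.1) : U (φ.imp ψ) ∈ Γ := by
  refine (U_mem_iff_forall_PhiGamma hΓ).2 fun Δ hΔ => hΔ.1.imp_mem_of_imp fun hφ => ?_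
  obtain ⟨w, rfl, -⟩ := exists_state_marker_top hΓ hΔ
  exact h w hφ

lemma khm_mem_of_forall_achieves_tail (hΓ : MCS Γ) {g h χ φ : Formula}
    {ρ : List (SigmaGamma Γ)} (hgh : khm g χ h ∈ Γ)
    (hρ : ∀ w : (canonicalModel Γ).S, h ∈ w.1.1 →
      (ρ ≠ [] → χ ∈ w.1.1) ∧ (canonicalModel Γ).Achieves ρ (χ ∈ ·.1.1) (φ ∈ ·.1.1) w)
    (ih : (∀ w : (canonicalModel Γ).S, h ∈ w.1.1 →
      (canonicalModel Γ).Achieves ρ (χ ∈ ·.1.1) (φ ∈ ·.1.1) w) → khm h χ φ ∈ Γ) :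
    khm g χ φ ∈ Γ := by
  rcases eq_or_ne ρ [] with rfl | hρne
  · exact hΓ.khm_mono hgh (hΓ.U_imp_self_mem g) (hΓ.U_imp_self_mem χ)
      (U_imp_mem_of_forall hΓ fun w hw => Model.achieves_nil.1 (hρ w hw).2)
  · exact hΓ.khm_comp hgh (ih fun w hw => (hρ w hw).2)
      (U_imp_mem_of_forall hΓ fun w hw => (hρ w hw).1 hρne)

lemma achieves_iff_of_formulas_eq {σ : List (SigmaGamma Γ)}
    (hσ : ∀ b ∈ σ.head?, ∃ ψ φ, b.1 = .one ψ φ) {P Q : Formula} {u v : (canonicalModel Γ).S}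
    (huv : u.1.1 = v.1.1) :
    (canonicalModel Γ).Achieves σ (P ∈ ·.1.1) (Q ∈ ·.1.1) u ↔
      (canonicalModel Γ).Achieves σ (P ∈ ·.1.1) (Q ∈ ·.1.1) v := by
  rcases σ with _ | ⟨⟨b, hb⟩, τ⟩
  · simp [huv]
  · obtain ⟨ψ, φ, rfl⟩ := hσ _ rfl
    exact Model.achieves_cons_congr fun t => by simp only [R_one, huv]

lemma exists_one_of_forall_achieves_cons (hΓ : MCS Γ) {a : SigmaGamma Γ}
    {τ : List (SigmaGamma Γ)} {P Q : (canonicalModel Γ).S → Prop} {g : Formula}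
    (hg : ∃ w : (canonicalModel Γ).S, g ∈ w.1.1)
    (h : ∀ w : (canonicalModel Γ).S, g ∈ w.1.1 → (canonicalModel Γ).Achieves (a :: τ) P Q w) :
    ∃ ψ' g', ∃ ha : CanAct.one ψ' g' ∈ SigmaGamma Γ, a = ⟨.one ψ' g', ha⟩ ∧
      U (g.imp ψ') ∈ Γ ∧ (∃ u : (canonicalModel Γ).S, u.1.2 = (g', ψ')) ∧
      ∀ u : (canonicalModel Γ).S, u.1.2 = (g', ψ') →
        (τ ≠ [] → P u) ∧ (canonicalModel Γ).Achieves τ P Q u := by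
  obtain ⟨w₀, hgw₀⟩ := hg
  obtain ⟨w, hw, hmark⟩ := exists_state_marker_top hΓ (mem_PhiGamma w₀)
  obtain ⟨⟨u₀, hu₀⟩, hsucc⟩ := Model.achieves_cons.1 (h w (hw ▸ hgw₀))
  obtain ⟨_ | _, ha⟩ := a
  case two => exact absurd hu₀ (not_R_two_of_marker_top hΓ hmark)
  case one ψ' g' =>
  -- the states with marker `g'^ψ'` are exactly the successors of the `g`-states
  refine ⟨ψ', g', ha, rfl, U_imp_mem_of_forall hΓ fun v hv => ?_, ⟨u₀, (R_one.1 hu₀).2⟩,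
    fun u hu => hsucc u ⟨(R_one.1 hu₀).1, hu⟩⟩
  obtain ⟨t, ht⟩ := (Model.achieves_cons.1 (h v hv)).1
  exact (R_one.1 ht).1

theorem khm_mem_of_forall_achieves (hΓ : MCS Γ) (χ φ : Formula) :
    ∀ (σ : List (SigmaGamma Γ)) (g : Formula), (∀ w : (canonicalModel Γ).S, g ∈ w.1.1 →
      (canonicalModel Γ).Achieves σ (χ ∈ ·.1.1) (φ ∈ ·.1.1) w) → khm g χ φ ∈ Γ
  | [], g, h =>
    hΓ.khm_of_U_imp χ (U_imp_mem_of_forall hΓ fun w hw => Model.achieves_nil.1 (h w hw))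
  | a :: τ, g, h => by
    by_cases hg : ∃ w : (canonicalModel Γ).S, g ∈ w.1.1
    swap
    · exact hΓ.khm_of_U_imp χ (U_imp_mem_of_forall hΓ fun w hw => absurd ⟨w, hw⟩ hg)
    obtain ⟨ψ', g', ha, rfl, hgψ', ⟨u₀, hu₀⟩, hA⟩ := exists_one_of_forall_achieves_cons hΓ hg h
    have hgg' : khm g χ g' ∈ Γ := hΓ.khm_falsum_mid_mono χ <| hΓ.khm_mono
      (khm_mem_of_one_mem_SigmaGamma ha) hgψ' (hΓ.U_imp_self_mem _) (hΓ.U_imp_self_mem _)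
    have htwin : ∀ v : (canonicalModel Γ).S, g' ∈ v.1.1 →
        ∃ u : (canonicalModel Γ).S, u.1.1 = v.1.1 ∧ u.1.2 = (g', ψ') :=
      fun v hv => exists_state (mem_PhiGamma v) hv ha
    have hg'χ : τ ≠ [] → U (g'.imp χ) ∈ Γ := fun hτ => U_imp_mem_of_forall hΓ fun v hv => by
      obtain ⟨u, huv, hu⟩ := htwin v hv
      exact huv ▸ (hA u hu).1 hτ
    have hhead : (∀ b ∈ τ.head?, ∃ ψ'' g'', b.1 = .one ψ'' g'') → khm g χ φ ∈ Γ := by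
      intro hτ
      refine khm_mem_of_forall_achieves_tail hΓ hgg' (fun v hv => ?_)
        (khm_mem_of_forall_achieves hΓ χ φ τ g')
      obtain ⟨u, huv, hu⟩ := htwin v hv
      exact ⟨fun hτ => huv ▸ (hA u hu).1 hτ, (achieves_iff_of_formulas_eq hτ huv).1 (hA u hu).2⟩
    rcases hτ : τ with _ | ⟨⟨_ | ⟨χ₂, ψ₂, g''⟩, hb⟩, ρ⟩
    · exact hhead (by simp [hτ])
    · exact hhead (by simp [hτ])
    subst hτ
    obtain ⟨⟨t₀, ht₀⟩, hsucc⟩ := Model.achieves_cons.1 (hA u₀ hu₀).2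
    obtain ⟨rfl, rfl⟩ := Prod.ext_iff.1 (hu₀.symm.trans (R_two.1 ht₀).1)
    have hgg'' : khm g χ g'' ∈ Γ := hΓ.khm_mono (khm_mem_of_two_mem_SigmaGamma hb).1 hgψ'
      (hg'χ (by simp)) (hΓ.U_imp_self_mem _)
    exact khm_mem_of_forall_achieves_tail hΓ hgg'' (fun v hv => hsucc v (R_two.2 ⟨hu₀, hv⟩))
      (khm_mem_of_forall_achieves hΓ χ φ ρ g'')
termination_by σ => σ.length

lemma exists_forall_achieves_of_khm_mem (hΓ : MCS Γ) {ψ χ φ : Formula}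
    (hkhm : khm ψ χ φ ∈ Γ) : ∃ σ : List (SigmaGamma Γ), ∀ w : (canonicalModel Γ).S,
      ψ ∈ w.1.1 → (canonicalModel Γ).Achieves σ (χ ∈ ·.1.1) (φ ∈ ·.1.1) w := by
  by_cases hψ : ∃ w : (canonicalModel Γ).S, ψ ∈ w.1.1
  swap
  · exact ⟨[], fun w hw => absurd ⟨w, hw⟩ hψ⟩
  replace hψ : ∃ Δ ∈ PhiGamma Γ, ψ ∈ Δ :=
    let ⟨w, hw⟩ := hψ
    ⟨w.1.1, mem_PhiGamma w, hw⟩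
  by_cases hbot : khm ψ falsum φ ∈ Γ
  · obtain ⟨Δ, hΔ, hφΔ⟩ := exists_mem_PhiGamma_of_khm_mem hΓ hbot hψ
    obtain ⟨u, -, hu⟩ := exists_state hΔ hφΔ (one_mem_SigmaGamma hbot)
    refine ⟨[⟨.one ψ φ, one_mem_SigmaGamma hbot⟩], fun w hw => Model.achieves_cons.2
      ⟨⟨u, hw, hu⟩, fun t ht => ⟨fun h => absurd rfl h, ?_⟩⟩⟩
    exact Model.achieves_nil.2 (mem_of_marker_eq (R_one.1 ht).2)
  -- otherwise `ONEKhm` gives a first step into `χ`, from where the marker `χ^ψ` leads to `φ`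
  have hnbot : neg (khm ψ falsum φ) ∈ Γ := hΓ.neg_mem_iff.2 hbot
  have hχ : khm ψ falsum χ ∈ Γ := hΓ.mem_of_imp_mem (hΓ.mem_of_deriv (Deriv.oneKhm ψ χ φ))
    (hΓ.and_mem_iff.2 ⟨hkhm, hnbot⟩)
  obtain ⟨Δ₁, hΔ₁, hχΔ₁⟩ := exists_mem_PhiGamma_of_khm_mem hΓ hχ hψ
  obtain ⟨u₁, -, hu₁⟩ := exists_state hΔ₁ hχΔ₁ (one_mem_SigmaGamma hχ)
  obtain ⟨Δ₂, hΔ₂, hφΔ₂⟩ := exists_mem_PhiGamma_of_khm_mem hΓ hkhm hψ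
  obtain ⟨u₂, rfl, -⟩ := exists_state_marker_top hΓ hΔ₂
  refine ⟨[⟨.one ψ χ, one_mem_SigmaGamma hχ⟩, ⟨.two χ ψ φ, two_mem_SigmaGamma hkhm hnbot⟩],
    fun w hw => Model.achieves_cons.2 ⟨⟨u₁, hw, hu₁⟩, fun t ht => ⟨fun _ => ?_, ?_⟩⟩⟩
  · exact mem_of_marker_eq (R_one.1 ht).2
  · exact Model.achieves_cons.2 ⟨⟨u₂, (R_one.1 ht).2, hφΔ₂⟩,
      fun s hs => ⟨fun h => absurd rfl h, Model.achieves_nil.2 (R_two.1 hs).2⟩⟩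

theorem sat_iff (hΓ : MCS Γ) (θ : Formula) (w : (canonicalModel Γ).S) :
    (canonicalModel Γ).sat θ w ↔ θ ∈ w.1.1 := by
  induction θ generalizing w with
  | atom n => rfl
  | neg φ ih => simp only [Model.sat, ih, (mcs w).neg_mem_iff]
  | and φ ψ ihφ ihψ => simp only [Model.sat, ihφ, ihψ, (mcs w).and_mem_iff]
  | khm ψ χ φ ihψ ihχ ihφ =>
    have hχ : (canonicalModel Γ).sat χ = (χ ∈ ·.1.1) := funext fun t => propext (ihχ t)
    have hφ : (canonicalModel Γ).sat φ = (φ ∈ ·.1.1) := funext fun t => propext (ihφ t)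
    rw [Model.sat_khm_iff, hχ, hφ, khm_mem_iff_of_mem_PhiGamma (mem_PhiGamma w)]
    simp only [ihψ]
    exact ⟨fun ⟨σ, hσ⟩ => khm_mem_of_forall_achieves hΓ χ φ σ ψ hσ,
      exists_forall_achieves_of_khm_mem hΓ⟩

end canonicalModel

end Canonical

lemma exists_sat_canonicalModel_of_consistentSet {Γ : Set Formula} (hΓ : ConsistentSet Γ) :
    ∃ Δ, MCS Δ ∧ ∃ w : (canonicalModel Δ).S, ∀ φ ∈ Γ, (canonicalModel Δ).sat φ w := by
  obtain ⟨Δ, hΓΔ, hΔ⟩ := hΓ.exists_mcs_superset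
  obtain ⟨w, hw, -⟩ := canonicalModel.exists_state_marker_top hΔ (mem_PhiGamma_self hΔ)
  exact ⟨Δ, hΔ, w, fun φ hφ => (canonicalModel.sat_iff hΔ φ w).2 (by rw [hw]; exact hΓΔ hφ)⟩

lemma consistentSet_singleton_neg {φ : Formula} (hφ : ¬ Deriv φ) : ConsistentSet {neg φ} :=
  fun L hL hd => hφ <| Deriv.of_tautEntails (L := [_]) (by simpa using hd) fun v hv => by
    by_contra hφv
    obtain ⟨ψ, hψL, hψv⟩ : ∃ ψ ∈ L, evalB v ψ = false := by simpa [evalB] using hv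
    rw [Set.mem_singleton_iff.1 (hL ψ hψL)] at hψv
    simp_all [evalB]

/-- SKHM is strongly complete: every SKHM-consistent set of
formulas is satisfiable at some state of some model; in particular every valid
formula is derivable in SKHM. -/
theorem skhm_strong_completeness :
    (∀ Γ : Set Formula, ConsistentSet Γ →
      ∃ (Act : Type) (_ : Countable Act) (_ : Nonempty Act) (M : Model Act)
        (_ : Nonempty M.S) (s : M.S), ∀ φ ∈ Γ, M.sat φ s) ∧
    (∀ φ : Formula,
      (∀ (Act : Type), Countable Act → Nonempty Act → Valid Act φ) →
      Deriv φ) := by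
  refine ⟨fun Γ hΓ => ?_, fun φ hφ => ?_⟩
  · obtain ⟨Δ, hΔ, w, hw⟩ := exists_sat_canonicalModel_of_consistentSet hΓ
    exact ⟨_, inferInstance, nonempty_SigmaGamma hΔ, canonicalModel Δ, ⟨w⟩, w, hw⟩
  · by_contra hnd
    obtain ⟨Δ, hΔ, w, hw⟩ :=
      exists_sat_canonicalModel_of_consistentSet (consistentSet_singleton_neg hnd)
    exact hw (neg φ) rfl (hφ _ inferInstance (nonempty_SigmaGamma hΔ) _ ⟨w⟩ w)
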